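/- arXiv:2403.06334 — 6 statements merged into one kernel-verified Lean document; each statement's English description precedes it below -/
import Mathlib

section
/- For a transitive Kripke frame F = (W, R), the McKinsey axiom □◇p → ◇□p is valid in F if and only if for every w ∈ W there exists u ∈ W with w R u and R(u) = {u}, where R(u) = {t : u R t}. -/
/- ============== Formulas ============== -/

/-- Unimodal formulas. -/
inductive MForm : Type
  | var : ℕ → MForm
  | bot : MForm
  | imp : MForm → MForm → MForm
  | box : MForm → MForm

namespace MForm
def neg (A : MForm) : MForm := A.imp .bot
def dia (A : MForm) : MForm := (MForm.box A.neg).neg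
def subst (σ : ℕ → MForm) : MForm → MForm
  | var n => σ n
  | bot => bot
  | imp A B => (subst σ A).imp (subst σ B)
  | box A => MForm.box (subst σ A)
end MForm

/-- Bimodal formulas (`box 0` is □₁ and `box 1` is □₂). -/
inductive BForm : Type
  | var : ℕ → BForm
  | bot : BForm
  | imp : BForm → BForm → BForm
  | box : Fin 2 → BForm → BForm

namespace BForm
def neg (A : BForm) : BForm := A.imp .bot
def dia (i : Fin 2) (A : BForm) : BForm := (BForm.box i A.neg).neg
def subst (σ : ℕ → BForm) : BForm → BForm
  | var n => σ n
  | bot => bot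
  | imp A B => (subst σ A).imp (subst σ B)
  | box i A => BForm.box i (subst σ A)
end BForm

/-- Translation of a unimodal formula into the bimodal language,
reading □ as □ᵢ. -/
def MForm.toB (i : Fin 2) : MForm → BForm
  | .var n => .var n
  | .bot => .bot
  | .imp A B => (MForm.toB i A).imp (MForm.toB i B)
  | .box A => BForm.box i (MForm.toB i A)

/- ============== Normal modal logics ============== -/

/-- Provability in the smallest normal unimodal logic containing the axioms `Ax`:
classical tautologies (via a Hilbert axiomatization), the normality axiom,
modus ponens, necessitation and uniform substitution. -/
inductive MProv (Ax : Set MForm) : MForm → Prop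
  | axm {A : MForm} : A ∈ Ax → MProv Ax A
  | pl1 {A B : MForm} : MProv Ax (A.imp (B.imp A))
  | pl2 {A B C : MForm} : MProv Ax ((A.imp (B.imp C)).imp ((A.imp B).imp (A.imp C)))
  | pl3 {A : MForm} : MProv Ax ((A.neg.neg).imp A)
  | kax {A B : MForm} : MProv Ax ((MForm.box (A.imp B)).imp ((MForm.box A).imp (MForm.box B)))
  | mp {A B : MForm} : MProv Ax (A.imp B) → MProv Ax A → MProv Ax B
  | nec {A : MForm} : MProv Ax A → MProv Ax (MForm.box A)
  | subst {A : MForm} (σ : ℕ → MForm) : MProv Ax A → MProv Ax (A.subst σ)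

/-- Provability in the smallest normal bimodal logic containing the axioms `Ax`. -/
inductive BProv (Ax : Set BForm) : BForm → Prop
  | axm {A : BForm} : A ∈ Ax → BProv Ax A
  | pl1 {A B : BForm} : BProv Ax (A.imp (B.imp A))
  | pl2 {A B C : BForm} : BProv Ax ((A.imp (B.imp C)).imp ((A.imp B).imp (A.imp C)))
  | pl3 {A : BForm} : BProv Ax ((A.neg.neg).imp A)
  | kax (i : Fin 2) {A B : BForm} :
      BProv Ax ((BForm.box i (A.imp B)).imp ((BForm.box i A).imp (BForm.box i B)))
  | mp {A B : BForm} : BProv Ax (A.imp B) → BProv Ax A → BProv Ax B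
  | nec (i : Fin 2) {A : BForm} : BProv Ax A → BProv Ax (BForm.box i A)
  | subst {A : BForm} (σ : ℕ → BForm) : BProv Ax A → BProv Ax (A.subst σ)

/-- The propositional letter p. -/
def pM : MForm := .var 0

/-- Axioms of S4 : □p→p and □p→□□p. -/
def S4Ax : Set MForm := {(MForm.box pM).imp pM, (MForm.box pM).imp (MForm.box (MForm.box pM))}

/-- The McKinsey axiom □◇p→◇□p. -/
def McKM : MForm := (MForm.box pM.dia).imp (MForm.box pM).dia

/-- The logic S4. -/
def S4L : Set MForm := {A | MProv S4Ax A}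

/-- The logic S4.1 = S4 + McKinsey. -/
def S41L : Set MForm := {A | MProv (S4Ax ∪ {McKM}) A}

/-- Axioms of the fusion S4.1 ∗ S4 : all theorems of S4.1 read with □₁ together
with all theorems of S4 read with □₂. -/
def FusionAx : Set BForm := (MForm.toB 0 '' S41L) ∪ (MForm.toB 1 '' S4L)

/-- The fusion S4.1 ∗ S4 (as a normal bimodal logic). -/
def FusionL : Set BForm := {A | BProv FusionAx A}

def pB : BForm := .var 0

/-- The formula ◇₁□₂(◇₁p → □₁p). -/
def MKB : BForm := BForm.dia 0 (BForm.box 1 ((BForm.dia 0 pB).imp (BForm.box 0 pB)))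

/-- The logic L = S4.1 ∗ S4 + ◇₁□₂(◇₁p → □₁p). -/
def LL : Set BForm := {A | BProv (FusionAx ∪ {MKB}) A}

/- ============== Kripke semantics ============== -/

/-- Truth of a bimodal formula at a point of a Kripke 2-frame `(W, R 0, R 1)`
under valuation `V`. -/
def BSat {W : Type} (R : Fin 2 → W → W → Prop) (V : ℕ → W → Prop) : W → BForm → Prop
  | x, .var n => V n x
  | _, .bot => False
  | x, .imp A B => BSat R V x A → BSat R V x B
  | x, .box i A => ∀ y, R i x y → BSat R V y A

/-- Frame validity for bimodal formulas. -/
def BValid {W : Type} (R : Fin 2 → W → W → Prop) (A : BForm) : Prop :=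
  ∀ (V : ℕ → W → Prop) (x : W), BSat R V x A

/-- Truth of a unimodal formula at a point of a Kripke frame. -/
def MKSat {W : Type} (R : W → W → Prop) (V : ℕ → W → Prop) : W → MForm → Prop
  | x, .var n => V n x
  | _, .bot => False
  | x, .imp A B => MKSat R V x A → MKSat R V x B
  | x, .box A => ∀ y, R x y → MKSat R V y A

/-- Frame validity for unimodal formulas. -/
def MKValid {W : Type} (R : W → W → Prop) (A : MForm) : Prop :=
  ∀ (V : ℕ → W → Prop) (x : W), MKSat R V x A

/- ============== Topological semantics ============== -/

/-- Topological truth of a unimodal formula: □A holds at `x` iff some open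
neighbourhood of `x` satisfies `A` everywhere. -/
def MTSat {X : Type} (t : TopologicalSpace X) (V : ℕ → X → Prop) : X → MForm → Prop
  | x, .var n => V n x
  | _, .bot => False
  | x, .imp A B => MTSat t V x A → MTSat t V x B
  | x, .box A => ∃ U : Set X, t.IsOpen U ∧ x ∈ U ∧ ∀ y ∈ U, MTSat t V y A

/-- Topological validity for unimodal formulas. -/
def MTValid {X : Type} (t : TopologicalSpace X) (A : MForm) : Prop :=
  ∀ (V : ℕ → X → Prop) (x : X), MTSat t V x A

/-- Bitopological truth of a bimodal formula: □ᵢ is interpreted via the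
topology `t i`. -/
def BTSat {X : Type} (t : Fin 2 → TopologicalSpace X) (V : ℕ → X → Prop) : X → BForm → Prop
  | x, .var n => V n x
  | _, .bot => False
  | x, .imp A B => BTSat t V x A → BTSat t V x B
  | x, .box i A => ∃ U : Set X, (t i).IsOpen U ∧ x ∈ U ∧ ∀ y ∈ U, BTSat t V y A

/-- Bitopological validity for bimodal formulas. -/
def BTValid {X : Type} (t : Fin 2 → TopologicalSpace X) (A : BForm) : Prop :=
  ∀ (V : ℕ → X → Prop) (x : X), BTSat t V x A

/-- The horizontal topology on `X × Y`: generated by the base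
`{U × {y} : U open in X, y ∈ Y}`. -/
def horiz {X Y : Type} (t : TopologicalSpace X) : TopologicalSpace (X × Y) :=
  TopologicalSpace.generateFrom
    {S | ∃ (U : Set X) (y : Y), t.IsOpen U ∧ S = U ×ˢ ({y} : Set Y)}

/-- The vertical topology on `X × Y`: generated by the base
`{{x} × U : x ∈ X, U open in Y}`. -/
def vert {X Y : Type} (t : TopologicalSpace Y) : TopologicalSpace (X × Y) :=
  TopologicalSpace.generateFrom
    {S | ∃ (x : X) (U : Set Y), t.IsOpen U ∧ S = ({x} : Set X) ×ˢ U}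

/-- The topological product `L₁ ×ₜ L₂` of two unimodal logics: the set of all
bimodal formulas valid in every bitopological product `𝔛₁ × 𝔛₂` of (nonempty)
topological spaces with `𝔛₁ ⊨ L₁` and `𝔛₂ ⊨ L₂`. -/
def TopProdLogic (L1 L2 : Set MForm) : Set BForm :=
  {A | ∀ (X Y : Type) (t1 : TopologicalSpace X) (t2 : TopologicalSpace Y),
      Nonempty X → Nonempty Y →
      (∀ B ∈ L1, MTValid t1 B) → (∀ B ∈ L2, MTValid t2 B) →
      BTValid ![horiz t1, vert t2] A}

/-- The Alexandrov topology of a (reflexive transitive) relation `R`: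
the topology with base `{R(x) : x ∈ W}`. -/
def alexandrov {W : Type} (R : W → W → Prop) : TopologicalSpace W :=
  TopologicalSpace.generateFrom {S | ∃ x, S = {t | R x t}}

/-- A space is weakly scattered if every nonempty open set contains an
isolated point. -/
def WeaklyScattered {X : Type} (t : TopologicalSpace X) : Prop :=
  ∀ U : Set X, t.IsOpen U → U.Nonempty → ∃ x ∈ U, t.IsOpen ({x} : Set X)

/-- p-morphism between Kripke 1-frames. -/
def IsPMorphism {W U : Type} (R : W → W → Prop) (S : U → U → Prop) (f : W → U) : Prop :=
  Function.Surjective f ∧ (∀ x y, R x y → S (f x) (f y)) ∧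
    (∀ x u, S (f x) u → ∃ y, R x y ∧ f y = u)

/-- p-morphism between Kripke 2-frames. -/
def IsPMorphism2 {W U : Type} (R1 R2 : W → W → Prop) (S1 S2 : U → U → Prop)
    (f : W → U) : Prop :=
  Function.Surjective f ∧
    (∀ x y, R1 x y → S1 (f x) (f y)) ∧ (∀ x u, S1 (f x) u → ∃ y, R1 x y ∧ f y = u) ∧
    (∀ x y, R2 x y → S2 (f x) (f y)) ∧ (∀ x u, S2 (f x) u → ∃ y, R2 x y ∧ f y = u)

/- ============== The frames 𝕋₂,₂ and 𝕋₂,₂₊₂ ============== -/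

/-- The four-letter alphabet {a₁,a₂,b₁,b₂}: `(false, i)` is the a-letter `aᵢ₊₁`
and `(true, i)` is the b-letter `bᵢ₊₁`. -/
abbrev Letter : Type := Bool × Fin 2

/-- `T₂,₂ = {a₁,a₂,b₁,b₂}*`. -/
abbrev T22 : Type := List Letter

/-- `T₂ = {1,2}*`. -/
abbrev T2W : Type := List (Fin 2)

/-- First relation of `𝕋₂,₂`: append a word over the a-letters. -/
def R1T (w w' : T22) : Prop := ∃ c : T22, (∀ l ∈ c, l.1 = false) ∧ w' = w ++ c

/-- Second relation of `𝕋₂,₂`: append a word over the b-letters. -/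
def R2T (w w' : T22) : Prop := ∃ d : T22, (∀ l ∈ d, l.1 = true) ∧ w' = w ++ d

/-- The carrier of `𝕋₂,₂₊₂` : `⟨a, root⟩` is encoded as `(a, none)` and
`⟨a, b⟩` with `b ∈ T₂` as `(a, some b)`. -/
abbrev W222 : Type := T22 × Option T2W

/-- Generators of `R₁′`. -/
def R1'gen : W222 → W222 → Prop := fun x y =>
  (∃ a a', R1T a a' ∧ x = (a, none) ∧ y = (a', none)) ∨
  (∃ a, x = (a, none) ∧ y = (a, some ([] : T2W)))

/-- `R₁′`: smallest reflexive transitive relation containing the generators. -/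
def R1' : W222 → W222 → Prop := Relation.ReflTransGen R1'gen

/-- Generators of `R₂′`. -/
def R2'gen : W222 → W222 → Prop := fun x y =>
  (∃ a a', R2T a a' ∧ x = (a, none) ∧ y = (a', none)) ∨
  (∃ a b b', b <+: b' ∧ x = (a, some b) ∧ y = (a, some b'))

/-- `R₂′`: smallest reflexive transitive relation containing the generators. -/
def R2' : W222 → W222 → Prop := Relation.ReflTransGen R2'gen

/- ============== Pseudo-infinite paths and the spaces 𝒴 and 𝔛 ============== -/

/-- Infinite sequences over {0,1,2}: `none` encodes 0 and `some i` encodes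
`i+1 ∈ {1,2}`. -/
abbrev Seq3 : Type := ℕ → Option (Fin 2)

/-- `W_ω`: pseudo-infinite paths, i.e. sequences with finitely many nonzero
entries. -/
def Wom : Type := {s : Seq3 // {k | s k ≠ none}.Finite}

/-- `st(s)`: the least `N` such that all entries from `N` on are zero. -/
noncomputable def stN {γ : Type} (s : ℕ → Option γ) : ℕ :=
  sInf {N | ∀ k, N ≤ k → s k = none}

/-- The first `k` entries of a sequence, as a finite word. -/
def takeSeq {γ : Type} (s : ℕ → Option γ) (k : ℕ) : List (Option γ) :=
  List.ofFn (fun i : Fin k => s i.1)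

/-- `f_F`: delete all zeros from a finite word. -/
def fF {γ : Type} (l : List (Option γ)) : List γ := l.filterMap id

/-- `f_ω`: delete the zeros from a pseudo-infinite path, producing a finite word. -/
noncomputable def squash {γ : Type} (s : ℕ → Option γ) : List γ := fF (takeSeq s (stN s))

/-- The basic set `U_k(α) = {β ∈ W_ω : α↾k = β↾k and f_F(α↾k) ⊑ f_ω(β)}`. -/
def Uset (α : Wom) (k : ℕ) : Set Wom :=
  {β | takeSeq β.1 k = takeSeq α.1 k ∧ fF (takeSeq α.1 k) <+: squash β.1}

/-- The topology `T_ω` on `W_ω` generated by the base `{U_k(α) : k > 0}`;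
`𝒴 = (W_ω, T_ω)`. -/
def Tom : TopologicalSpace Wom :=
  TopologicalSpace.generateFrom {S | ∃ α k, 0 < k ∧ S = Uset α k}

/-- The basic sets of the space `𝔛`:
`U′_k(α,0) = (U_k(α) × {0}) ∪ (U_k(α) × {n ≥ k})` and `U′_k(α,n) = {⟨α,n⟩}`
for `n ≥ 1`. -/
def U'set (α : Wom) (k n : ℕ) : Set (Wom × ℕ) :=
  if n = 0 then (Uset α k ×ˢ ({0} : Set ℕ)) ∪ (Uset α k ×ˢ {m : ℕ | k ≤ m})
  else {(α, n)}

/-- The topology of the space `𝔛 = (W_ω × ℕ, T)`. -/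
def TX : TopologicalSpace (Wom × ℕ) :=
  TopologicalSpace.generateFrom {S | ∃ α k n, S = U'set α k n}

/-- Interleaving of two paths: the sequence `a_{x₁} b_{y₁} a_{x₂} b_{y₂} …`
(with `a₀ = b₀ = 0`). -/
def interleave (α β : Seq3) : ℕ → Option Letter := fun n =>
  if n % 2 = 0 then (α (n / 2)).map (fun v => ((false, v) : Letter))
  else (β (n / 2)).map (fun v => ((true, v) : Letter))

/-- The map `g : W_ω × W_ω → T₂,₂` obtained by interleaving and deleting zeros. -/
noncomputable def gmap (α β : Seq3) : T22 := squash (interleave α β)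

/-- `g` as a map on pairs. -/
noncomputable def gPair : Wom × Wom → T22 := fun q => gmap q.1.1 q.2.1

/-- `s↾n · 0^ω`. -/
def truncSeq (s : Seq3) (n : ℕ) : Seq3 := fun k => if k < n then s k else none

/-- The tail `γ` of `s = s↾n · γ`. -/
def shiftSeq (s : Seq3) (n : ℕ) : Seq3 := fun k => s (n + k)

/-- The map `f : 𝔛 × 𝒴 → 𝕋₂,₂₊₂` :
`f(⟨α,0⟩,β) = ⟨g(α,β), root⟩` and for `n ≥ 1`,
`f(⟨α,n⟩,β) = ⟨g(α↾n·0^ω, β↾n·0^ω), f_ω(γ)⟩` where `β = β↾n·γ`. -/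
noncomputable def fXY : (Wom × ℕ) × Wom → W222 := fun q =>
  if q.1.2 = 0 then (gmap q.1.1.1 q.2.1, none)
  else (gmap (truncSeq q.1.1.1 q.1.2) (truncSeq q.2.1 q.1.2),
        some (squash (shiftSeq q.2.1 q.1.2)))

/-- An effective encoding of bimodal formulas by natural numbers. -/
def encodeB : BForm → ℕ
  | .var n => Nat.pair 0 n
  | .bot => Nat.pair 1 0
  | .imp A B => Nat.pair 2 (Nat.pair (encodeB A) (encodeB B))
  | .box i A => Nat.pair 3 (Nat.pair i.1 (encodeB A))


namespace McKHelp
open Function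

set_option linter.unusedSectionVars false

variable {X : Type} [Nonempty X] (f : X → X)

/-- `x` lies on a cycle of `f`. -/
def IsCyc (x : X) : Prop := ∃ n, 1 ≤ n ∧ f^[n] x = x

/-- the forward orbit of `x` eventually reaches a cycle. -/
def Hits (x : X) : Prop := ∃ n, IsCyc f (f^[n] x)

lemma isCyc_f {x : X} (h : IsCyc f x) : IsCyc f (f x) := by
  obtain ⟨n, hn, hx⟩ := h
  refine ⟨n, hn, ?_⟩
  rw [← iterate_succ_apply, iterate_succ_apply', hx]

lemma isCyc_iter {x : X} (h : IsCyc f x) (k : ℕ) : IsCyc f (f^[k] x) := by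
  induction k with
  | zero => exact h
  | succ k ih => rw [iterate_succ_apply']; exact isCyc_f f ih

/-- a representative of the orbit of `x`. -/
noncomputable def crep (x : X) : X := Classical.epsilon (fun y => ∃ n, f^[n] x = y)

lemma crep_mem (x : X) : ∃ n, f^[n] x = crep f x :=
  Classical.epsilon_spec (⟨x, 0, rfl⟩ : ∃ y, ∃ n, f^[n] x = y)

lemma orbit_pred_cyc {x : X} (h : IsCyc f x) (y : X) :
    (∃ n, f^[n] (f x) = y) ↔ (∃ n, f^[n] x = y) := by
  obtain ⟨k, hk, hkx⟩ := h
  constructor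
  · rintro ⟨n, rfl⟩
    exact ⟨n + 1, by rw [iterate_succ_apply]⟩
  · rintro ⟨n, rfl⟩
    refine ⟨n + (k - 1), ?_⟩
    have h1 : f^[n + (k - 1)] (f x) = f^[n + (k - 1) + 1] x :=
      (iterate_succ_apply f _ x).symm
    rw [h1, show n + (k - 1) + 1 = n + k by omega, iterate_add_apply, hkx]

lemma crep_f_cyc {x : X} (h : IsCyc f x) : crep f (f x) = crep f x := by
  unfold crep
  congr 1
  funext y
  exact propext (orbit_pred_cyc f h y)

lemma crep_iter_cyc {x : X} (h : IsCyc f x) (t : ℕ) : crep f (f^[t] x) = crep f x := by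
  induction t with
  | zero => rfl
  | succ t ih => rw [iterate_succ_apply', crep_f_cyc f (isCyc_iter f h t), ih]

/-- a representative of the connected component of `x`. -/
noncomputable def rep2 (x : X) : X := Classical.epsilon (fun y => ∃ m n, f^[m] x = f^[n] y)

lemma rep2_mem (x : X) : ∃ m n, f^[m] x = f^[n] (rep2 f x) :=
  Classical.epsilon_spec (⟨x, 0, 0, rfl⟩ : ∃ y, ∃ m n, f^[m] x = f^[n] y)

lemma rep2_f (x : X) : rep2 f (f x) = rep2 f x := by
  unfold rep2
  congr 1
  funext y
  refine propext ⟨?_, ?_⟩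
  · rintro ⟨m, n, h⟩
    exact ⟨m + 1, n, by rw [iterate_succ_apply]; exact h⟩
  · rintro ⟨m, n, h⟩
    refine ⟨m, n + 1, ?_⟩
    calc f^[m] (f x) = f^[m + 1] x := (iterate_succ_apply f m x).symm
      _ = f (f^[m] x) := iterate_succ_apply' f m x
      _ = f (f^[n] y) := by rw [h]
      _ = f^[n + 1] y := (iterate_succ_apply' f n y).symm

lemma not_hits_f {x : X} (h : ¬ Hits f x) : ¬ Hits f (f x) := by
  rintro ⟨n, hn⟩
  exact h ⟨n + 1, by rwa [iterate_succ_apply]⟩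

lemma iter_inj_of_not_hits {x r : X} (hx : ¬ Hits f x) {m n : ℕ}
    (hmn : f^[m] x = f^[n] r) : ∀ a b, f^[a] r = f^[b] r → a = b := by
  have key : ∀ a b : ℕ, a < b → f^[a] r = f^[b] r → False := by
    intro a b hab h
    have hcyc : IsCyc f (f^[a] r) := by
      refine ⟨b - a, by omega, ?_⟩
      rw [← iterate_add_apply, show b - a + a = b by omega, ← h]
    have h2 : IsCyc f (f^[n] (f^[a] r)) := isCyc_iter f hcyc n
    rw [← iterate_add_apply, Nat.add_comm n a, iterate_add_apply, ← hmn,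
      ← iterate_add_apply] at h2
    exact hx ⟨a + m, h2⟩
  intro a b h
  rcases lt_trichotomy a b with hlt | he | hlt
  · exact absurd h (by intro hh; exact key a b hlt hh)
  · exact he
  · exact absurd h.symm (by intro hh; exact key b a hlt hh)

/-- the parity color on non-cycle-reaching components. -/
def Qpred (x : X) : Prop := ∀ m n, f^[m] x = f^[n] (rep2 f x) → (m + n) % 2 = 0

lemma Qpred_iff {x : X} (hx : ¬ Hits f x) {m₀ n₀ : ℕ}
    (h0 : f^[m₀] x = f^[n₀] (rep2 f x)) : Qpred f x ↔ (m₀ + n₀) % 2 = 0 := by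
  constructor
  · intro h; exact h m₀ n₀ h0
  · intro hpar m n h
    have e1 : f^[m + m₀] x = f^[m + n₀] (rep2 f x) := by
      rw [iterate_add_apply, iterate_add_apply, h0]
    have e2 : f^[m₀ + m] x = f^[m₀ + n] (rep2 f x) := by
      rw [iterate_add_apply, iterate_add_apply, h]
    rw [Nat.add_comm m₀ m] at e2
    have e3 : f^[m + n₀] (rep2 f x) = f^[m₀ + n] (rep2 f x) := by rw [← e1, e2]
    have := iter_inj_of_not_hits f hx h0 _ _ e3
    omega

/-- the global coloring. -/
noncomputable def Pcol (x : X) : Prop :=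
  (IsCyc f x ∧ crep f x = x) ∨ (¬ Hits f x ∧ Qpred f x)

theorem coloring (hf : ∀ x, f x ≠ x) (x : X) :
    (∃ i, 1 ≤ i ∧ Pcol f (f^[i] x)) ∧ (∃ j, 1 ≤ j ∧ ¬ Pcol f (f^[j] x)) := by
  by_cases hx : Hits f x
  · obtain ⟨n, hcyc⟩ := hx
    obtain ⟨t, ht⟩ := crep_mem f (f^[n] x)
    set r := crep f (f^[n] x) with hr
    have hrc : IsCyc f r := ht ▸ isCyc_iter f hcyc t
    have hcr : crep f r = r := by
      rw [← ht, crep_iter_cyc f hcyc t, ht]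
    have hPr : Pcol f r := Or.inl ⟨hrc, hcr⟩
    have hreq : f^[t + n] x = r := by rw [iterate_add_apply, ht]
    constructor
    · by_cases htn : 1 ≤ t + n
      · exact ⟨t + n, htn, by rw [hreq]; exact hPr⟩
      · -- t = n = 0, so r = x and x is cyclic
        have hxr : x = r := by
          have : t + n = 0 := by omega
          rw [← hreq, this]; rfl
        obtain ⟨k, hk, hkx⟩ := hrc
        exact ⟨k, hk, by rw [hxr, hkx]; exact hPr⟩
    · refine ⟨t + n + 1, by omega, ?_⟩
      have hfr : f^[t + n + 1] x = f r := by rw [iterate_succ_apply', hreq]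
      rw [hfr]
      rintro (⟨hc, he⟩ | ⟨hnh, _⟩)
      · rw [crep_f_cyc f hrc, hcr] at he
        exact hf r he.symm
      · exact hnh ⟨0, isCyc_f f hrc⟩
  · -- component never hits a cycle
    have h1 : ¬ Hits f (f x) := not_hits_f f hx
    have h2 : ¬ Hits f (f^[2] x) := by
      have : f^[2] x = f (f x) := by rw [iterate_succ_apply', iterate_one]
      rw [this]; exact not_hits_f f h1
    obtain ⟨m₀, n₀, h0⟩ := rep2_mem f x
    have hw1 : f^[m₀] (f x) = f^[n₀ + 1] (rep2 f (f x)) := by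
      rw [rep2_f]
      calc f^[m₀] (f x) = f^[m₀ + 1] x := (iterate_succ_apply f m₀ x).symm
        _ = f (f^[m₀] x) := iterate_succ_apply' f m₀ x
        _ = f (f^[n₀] (rep2 f x)) := by rw [h0]
        _ = f^[n₀ + 1] (rep2 f x) := (iterate_succ_apply' f n₀ _).symm
    have hw2 : f^[m₀] (f^[2] x) = f^[n₀ + 2] (rep2 f (f^[2] x)) := by
      have e : rep2 f (f^[2] x) = rep2 f x := by
        have : f^[2] x = f (f x) := by rw [iterate_succ_apply', iterate_one]
        rw [this, rep2_f, rep2_f]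
      rw [e]
      calc f^[m₀] (f^[2] x) = f^[m₀ + 2] x := (iterate_add_apply f m₀ 2 x).symm
        _ = f^[2] (f^[m₀] x) := by rw [Nat.add_comm, iterate_add_apply]
        _ = f^[2] (f^[n₀] (rep2 f x)) := by rw [h0]
        _ = f^[2 + n₀] (rep2 f x) := (iterate_add_apply f 2 n₀ _).symm
        _ = f^[n₀ + 2] (rep2 f x) := by rw [Nat.add_comm]
    have hP1 : Pcol f (f x) ↔ (m₀ + (n₀ + 1)) % 2 = 0 := by
      unfold Pcol
      rw [Qpred_iff f h1 hw1]
      constructor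
      · rintro (⟨hc, _⟩ | ⟨_, h⟩)
        · exact absurd ⟨0, hc⟩ h1
        · exact h
      · intro h; exact Or.inr ⟨h1, h⟩
    have hP2 : Pcol f (f^[2] x) ↔ (m₀ + (n₀ + 2)) % 2 = 0 := by
      unfold Pcol
      rw [Qpred_iff f h2 hw2]
      constructor
      · rintro (⟨hc, _⟩ | ⟨_, h⟩)
        · exact absurd ⟨0, hc⟩ h2
        · exact h
      · intro h; exact Or.inr ⟨h2, h⟩
    have hfx : f^[1] x = f x := congrFun (iterate_one f) x
    by_cases hpar : (m₀ + n₀) % 2 = 0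
    · refine ⟨⟨2, by omega, hP2.mpr (by omega)⟩, ⟨1, le_refl 1, ?_⟩⟩
      rw [hfx]
      intro h
      have := hP1.mp h
      omega
    · refine ⟨⟨1, le_refl 1, by rw [hfx]; exact hP1.mpr (by omega)⟩, ⟨2, by omega, ?_⟩⟩
      intro h
      have := hP2.mp h
      omega

end McKHelp

/-- for a transitive frame (W,R), the McKinsey axiom □◇p → ◇□p is
valid iff every point sees a point u with R(u) = {u}. -/


theorem mcKinsey_frame_correspondence :
    ∀ (W : Type) (R : W → W → Prop), Nonempty W → Transitive R →
      (MKValid R McKM ↔ ∀ w : W, ∃ u : W, R w u ∧ {t | R u t} = {u}) := by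
  intro W R _ htr
  have satMcK : ∀ (V : ℕ → W → Prop) (x : W), MKSat R V x McKM ↔
      ((∀ y, R x y → ((∀ z, R y z → (V 0 z → False)) → False)) →
        ((∀ y, R x y → ((∀ z, R y z → V 0 z) → False)) → False)) := by
    intro V x
    simp only [McKM, MForm.dia, MForm.neg, pM, MKSat]
  constructor
  · -- hard direction
    intro hv w
    by_contra hno
    push_neg at hno
    -- every point of W has a successor
    have hsucc : ∀ u : W, ∃ z, R u z := by
      intro u
      by_contra hne
      push_neg at hne
      have h := (satMcK (fun _ _ => True) u).mp (hv _ u)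
      exact h (fun y hy => absurd hy (hne y)) (fun y hy => absurd hy (hne y))
    -- the subtype of successors of w
    haveI hXne : Nonempty {u // R w u} := by
      obtain ⟨z, hz⟩ := hsucc w
      exact ⟨⟨z, hz⟩⟩
    -- each successor of w has a successor distinct from itself
    have hstep : ∀ u : {u // R w u}, ∃ z : {u // R w u}, R u.1 z.1 ∧ z ≠ u := by
      intro ⟨u, hu⟩
      have hne := hno u hu
      obtain ⟨z, hz⟩ := hsucc u
      have : ∃ z, R u z ∧ z ≠ u := by
        by_contra hc
        push_neg at hc
        apply hne
        ext t
        constructor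
        · intro ht
          exact hc t ht
        · rintro rfl
          have := hc z hz
          subst this
          exact hz
      obtain ⟨z', hz', hz'ne⟩ := this
      exact ⟨⟨z', htr hu hz'⟩, hz', fun h => hz'ne (congrArg Subtype.val h)⟩
    classical
    let f : {u // R w u} → {u // R w u} := fun u => (hstep u).choose
    have hfR : ∀ u, R u.1 (f u).1 := fun u => (hstep u).choose_spec.1
    have hfne : ∀ u, f u ≠ u := fun u => (hstep u).choose_spec.2
    obtain ⟨P, hP⟩ : ∃ P : {u // R w u} → Prop, ∀ x,
        (∃ i, 1 ≤ i ∧ P (f^[i] x)) ∧ (∃ j, 1 ≤ j ∧ ¬ P (f^[j] x)) :=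
      ⟨McKHelp.Pcol f, McKHelp.coloring f hfne⟩
    -- iterates are accessible
    have hiter : ∀ (u : {u // R w u}) (i : ℕ), 1 ≤ i → R u.1 (f^[i] u).1 := by
      intro u i hi
      induction i with
      | zero => omega
      | succ i ih =>
        rcases Nat.eq_or_lt_of_le hi with h1 | h1
        · have : f^[1] u = f u := congrFun (Function.iterate_one f) u
          rw [← h1, this]
          exact hfR u
        · have hii : 1 ≤ i := by omega
          have h2 : f^[i + 1] u = f (f^[i] u) := Function.iterate_succ_apply' f i u
          rw [h2]
          exact htr (ih hii) (hfR (f^[i] u))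
    set V : ℕ → W → Prop := fun _ z => ∃ x : {u // R w u}, x.1 = z ∧ P x with hV
    have h := (satMcK V w).mp (hv V w)
    apply h
    · intro y hy hall
      obtain ⟨i, hi, hPi⟩ := (hP ⟨y, hy⟩).1
      exact hall (f^[i] ⟨y, hy⟩).1 (hiter ⟨y, hy⟩ i hi) ⟨f^[i] ⟨y, hy⟩, rfl, hPi⟩
    · intro y hy hall
      obtain ⟨j, hj, hPj⟩ := (hP ⟨y, hy⟩).2
      obtain ⟨x, hx1, hx2⟩ := hall (f^[j] ⟨y, hy⟩).1 (hiter ⟨y, hy⟩ j hj)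
      exact hPj (Subtype.ext hx1 ▸ hx2)
  · -- easy direction
    intro hcond V x
    rw [satMcK]
    intro h1 h2
    obtain ⟨u, hwu, hu⟩ := hcond x
    have hRuu : R u u := by
      have : u ∈ {t | R u t} := by rw [hu]; rfl
      exact this
    have hVu : V 0 u := by
      by_contra hVu
      apply h1 u hwu
      intro z hz hV
      have hzu : z = u := by
        have hm : z ∈ ({u} : Set W) := hu ▸ hz
        exact hm
      exact hVu (hzu ▸ hV)
    apply h2 u hwu
    intro z hz
    have hzu : z = u := by
      have hm : z ∈ ({u} : Set W) := hu ▸ hz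
      exact hm
    rw [hzu]
    exact hVu
end

section
/- For any Kripke 2-frame F = (W, R₁, R₂) validating the fusion S4.1 ∗ S4, the formula ◇₁□₂(◇₁p → □₁p) is valid in F if and only if for every x ∈ W there exists y ∈ W with x R₁ y such that for every z with y R₂ z one has R₁(z) = {z}, where R₁(z) = {t : z R₁ t}. -/
open Function

/-- Orbit 2-coloring of a fixpoint-free function: there is a set meeting and
missing every forward orbit. -/
lemma orbit_coloring {T : Type} (g : T → T) (hg : ∀ w, g w ≠ w) :
    ∃ V : T → Prop, ∀ t, (∃ n, V (g^[n] t)) ∧ ∃ n, ¬ V (g^[n] t) := by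
  classical
  have heq : Equivalence (fun t s : T => ∃ m n, g^[m] t = g^[n] s) := by
    refine ⟨fun t => ⟨0, 0, rfl⟩, ?_, ?_⟩
    · rintro t s ⟨m, n, h⟩; exact ⟨n, m, h.symm⟩
    · rintro t s u ⟨m, n, h1⟩ ⟨m', n', h2⟩
      refine ⟨m' + m, n + n', ?_⟩
      calc g^[m' + m] t = g^[m'] (g^[m] t) := Function.iterate_add_apply g m' m t
        _ = g^[m'] (g^[n] s) := by rw [h1]
        _ = g^[m' + n] s := (Function.iterate_add_apply g m' n s).symm
        _ = g^[n + m'] s := by rw [add_comm]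
        _ = g^[n] (g^[m'] s) := Function.iterate_add_apply g n m' s
        _ = g^[n] (g^[n'] u) := by rw [h2]
        _ = g^[n + n'] u := (Function.iterate_add_apply g n n' u).symm
  letI sd : Setoid T := ⟨_, heq⟩
  let rep : T → T := fun t => (Quotient.mk sd t).out
  have hrepE : ∀ t : T, ∃ m n, g^[m] (rep t) = g^[n] t := fun t =>
    Quotient.exact (Quotient.out_eq (Quotient.mk sd t))
  have hrep_iter : ∀ (t : T) (n : ℕ), rep (g^[n] t) = rep t := fun t n =>
    congrArg Quotient.out (Quotient.sound ⟨0, n, rfl⟩)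
  have main : ∀ t : T, ∃ k n1 n2 : ℕ,
      g^[n1] t = g^[k] (rep t) ∧ g^[n2] t = g^[k+1] (rep t) ∧
      sInf {i | g^[i] (rep t) = g^[k] (rep t)} = k ∧
      sInf {i | g^[i] (rep t) = g^[k+1] (rep t)} = k + 1 := by
    intro t
    obtain ⟨b, a, hab⟩ := hrepE t
    set r := rep t with hr
    by_cases hinj : ∀ i j : ℕ, g^[i] r = g^[j] r → i = j
    · refine ⟨b, a, a + 1, hab.symm, ?_, ?_, ?_⟩
      · rw [Function.iterate_succ_apply', Function.iterate_succ_apply', hab]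
      · exact le_antisymm (Nat.sInf_le rfl) (le_csInf ⟨b, rfl⟩ fun i hi => (hinj i b hi).ge)
      · exact le_antisymm (Nat.sInf_le rfl)
          (le_csInf ⟨b + 1, rfl⟩ fun i hi => (hinj i (b + 1) hi).ge)
    · push_neg at hinj
      obtain ⟨i, j, hij, hne⟩ := hinj
      have hCne : ∃ m, ∃ p, 0 < p ∧ g^[m + p] r = g^[m] r := by
        rcases hne.lt_or_gt with h | h
        · exact ⟨i, j - i, by omega, by rw [show i + (j - i) = j by omega]; exact hij.symm⟩
        · exact ⟨j, i - j, by omega, by rw [show j + (i - j) = i by omega]; exact hij⟩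
      set C := {m | ∃ p, 0 < p ∧ g^[m + p] r = g^[m] r} with hC
      obtain ⟨p, hp0, hp⟩ : sInf C ∈ C := Nat.sInf_mem hCne
      set k := sInf C with hk
      have hmul : ∀ q : ℕ, g^[k + p * q] r = g^[k] r := by
        intro q; induction q with
        | zero => simp
        | succ q ih =>
          have h1 : k + p * (q + 1) = p + (k + p * q) := by ring
          rw [h1, Function.iterate_add_apply, ih, ← Function.iterate_add_apply,
            add_comm p k]
          exact hp
      have hmu1 : sInf {i | g^[i] r = g^[k] r} = k := by
        refine le_antisymm (Nat.sInf_le rfl) (le_csInf ⟨k, rfl⟩ fun m hm => ?_)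
        by_contra hlt
        push_neg at hlt
        have hmC : m ∈ C := by
          refine ⟨p, hp0, ?_⟩
          calc g^[m + p] r = g^[p + m] r := by rw [add_comm]
            _ = g^[p] (g^[m] r) := Function.iterate_add_apply g p m r
            _ = g^[p] (g^[k] r) := by rw [hm]
            _ = g^[p + k] r := (Function.iterate_add_apply g p k r).symm
            _ = g^[k + p] r := by rw [add_comm]
            _ = g^[k] r := hp
            _ = g^[m] r := hm.symm
        exact absurd (Nat.sInf_le hmC) (by omega)
      have hstep : g^[k+1] r = g (g^[k] r) := Function.iterate_succ_apply' g k r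
      have hne1 : g^[k+1] r ≠ g^[k] r := by rw [hstep]; exact hg _
      have hmu2 : sInf {i | g^[i] r = g^[k+1] r} = k + 1 := by
        refine le_antisymm (Nat.sInf_le rfl) (le_csInf ⟨k + 1, rfl⟩ fun m hm => ?_)
        by_contra hlt
        push_neg at hlt
        have hmC : m ∈ C := by
          refine ⟨p, hp0, ?_⟩
          calc g^[m + p] r = g^[p + m] r := by rw [add_comm]
            _ = g^[p] (g^[m] r) := Function.iterate_add_apply g p m r
            _ = g^[p] (g^[k+1] r) := by rw [hm]
            _ = g^[p + (k+1)] r := (Function.iterate_add_apply g p (k+1) r).symm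
            _ = g^[1 + (k + p)] r := by ring_nf
            _ = g (g^[k + p] r) := by
                rw [add_comm 1 (k + p)]
                exact Function.iterate_succ_apply' g (k + p) r
            _ = g (g^[k] r) := by rw [hp]
            _ = g^[k+1] r := hstep.symm
            _ = g^[m] r := hm.symm
        have hkm : k ≤ m := Nat.sInf_le hmC
        have hmk : m = k := by omega
        subst hmk
        exact hne1 (hm.symm) |>.elim
      have hbN : b ≤ k + p * b := by nlinarith
      refine ⟨k, (k + p * b - b) + a, ((k + p * b - b) + a) + 1, ?_, ?_, hmu1, hmu2⟩
      · calc g^[(k + p * b - b) + a] t = g^[k + p * b - b] (g^[a] t) :=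
              Function.iterate_add_apply g _ a t
          _ = g^[k + p * b - b] (g^[b] r) := by rw [← hab]
          _ = g^[(k + p * b - b) + b] r := (Function.iterate_add_apply g _ b r).symm
          _ = g^[k + p * b] r := by rw [show (k + p * b - b) + b = k + p * b by omega]
          _ = g^[k] r := hmul b
      · rw [Function.iterate_succ_apply']
        have h1 : g^[(k + p * b - b) + a] t = g^[k] r := by
          calc g^[(k + p * b - b) + a] t = g^[k + p * b - b] (g^[a] t) :=
                Function.iterate_add_apply g _ a t
            _ = g^[k + p * b - b] (g^[b] r) := by rw [← hab]
            _ = g^[(k + p * b - b) + b] r := (Function.iterate_add_apply g _ b r).symm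
            _ = g^[k + p * b] r := by rw [show (k + p * b - b) + b = k + p * b by omega]
            _ = g^[k] r := hmul b
        rw [h1, ← hstep]
  refine ⟨fun w => (∃ kk, g^[kk] (rep w) = w) ∧ Even (sInf {kk | g^[kk] (rep w) = w}), ?_⟩
  intro t
  obtain ⟨k, n1, n2, h1, h2, hk1, hk2⟩ := main t
  have e1 : rep (g^[n1] t) = rep t := hrep_iter t n1
  have e2 : rep (g^[n2] t) = rep t := hrep_iter t n2
  have V1 : ((∃ kk, g^[kk] (rep (g^[n1] t)) = g^[n1] t) ∧
      Even (sInf {kk | g^[kk] (rep (g^[n1] t)) = g^[n1] t})) ↔ Even k := by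
    rw [e1, h1, hk1]
    exact ⟨fun h => h.2, fun h => ⟨⟨k, rfl⟩, h⟩⟩
  have V2 : ((∃ kk, g^[kk] (rep (g^[n2] t)) = g^[n2] t) ∧
      Even (sInf {kk | g^[kk] (rep (g^[n2] t)) = g^[n2] t})) ↔ Even (k + 1) := by
    rw [e2, h2, hk2]
    exact ⟨fun h => h.2, fun h => ⟨⟨k + 1, rfl⟩, h⟩⟩
  rcases Nat.even_or_odd k with hk | hk
  · exact ⟨⟨n1, V1.mpr hk⟩, ⟨n2, fun hc => (Nat.even_add_one.mp (V2.mp hc)) hk⟩⟩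
  · refine ⟨⟨n2, V2.mpr (Nat.even_add_one.mpr (by simpa [Nat.not_even_iff_odd] using hk))⟩,
      ⟨n1, fun hc => (Nat.not_even_iff_odd.mpr hk) (V1.mp hc)⟩⟩

/-- Semantic McKinsey + refl + trans gives final successors. -/
lemma mckinsey_final {W : Type} (R : W → W → Prop)
    (hrefl : ∀ x, R x x) (htrans : ∀ {x y z}, R x y → R y z → R x z)
    (hmck : ∀ (V : W → Prop) (x : W),
      (∀ y, R x y → ∃ z, R y z ∧ V z) → ∃ y, R x y ∧ ∀ z, R y z → V z)
    (x : W) : ∃ y, R x y ∧ ∀ z, R y z → z = y := by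
  classical
  by_contra hcon
  push_neg at hcon
  -- hcon : ∀ y, R x y → ∃ z, R y z ∧ z ≠ y
  set f : W → W := fun y => if h : ∃ z, R y z ∧ z ≠ y then h.choose else y with hf
  have hfspec : ∀ y, R x y → R y (f y) ∧ f y ≠ y := by
    intro y hy
    have h : ∃ z, R y z ∧ z ≠ y := hcon y hy
    simp only [hf, dif_pos h]
    exact h.choose_spec
  -- work on the subtype S = R(x)
  let T := {y : W // R x y}
  let g : T → T := fun y => ⟨f y.1, htrans y.2 (hfspec y.1 y.2).1⟩
  have hg : ∀ w : T, g w ≠ w := by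
    intro w hw
    exact (hfspec w.1 w.2).2 (congrArg Subtype.val hw)
  obtain ⟨c, hc⟩ := orbit_coloring g hg
  have hreach : ∀ (t : T) (n : ℕ), R t.1 (g^[n] t).1 := by
    intro t n
    induction n with
    | zero => exact hrefl t.1
    | succ n ih =>
      rw [Function.iterate_succ_apply']
      exact htrans ih (hfspec (g^[n] t).1 (g^[n] t).2).1
  set V : W → Prop := fun w => ∃ h : R x w, c ⟨w, h⟩ with hV
  obtain ⟨y, hxy, hall⟩ := hmck V x (by
    intro y hy
    obtain ⟨n, hn⟩ := (hc ⟨y, hy⟩).1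
    exact ⟨(g^[n] ⟨y, hy⟩).1, hreach ⟨y, hy⟩ n, ⟨(g^[n] ⟨y, hy⟩).2, hn⟩⟩)
  obtain ⟨n, hn⟩ := (hc ⟨y, hxy⟩).2
  obtain ⟨h', hc'⟩ := hall (g^[n] ⟨y, hxy⟩).1 (hreach ⟨y, hxy⟩ n)
  exact hn hc'

section Semantics

variable {W : Type} (R1 R2 : W → W → Prop)

/-- Unfolding truth of `MKB`. -/
lemma BSat_MKB (V : ℕ → W → Prop) (x : W) :
    BSat ![R1, R2] V x MKB ↔
      ∃ y, R1 x y ∧ ∀ z, R2 y z →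
        ((∃ t, R1 z t ∧ V 0 t) → ∀ t, R1 z t → V 0 t) := by
  simp [MKB, BForm.dia, BForm.neg, BSat, pB]

lemma valid_T1 (h : BValid ![R1, R2] (MForm.toB 0 ((MForm.box pM).imp pM))) :
    ∀ x, R1 x x := by
  intro x
  have := h (fun _ w => R1 x w) x
  simp [MForm.toB, pM, BSat] at this
  exact this

lemma valid_4 (h : BValid ![R1, R2]
    (MForm.toB 0 ((MForm.box pM).imp (MForm.box (MForm.box pM))))) :
    ∀ {x y z}, R1 x y → R1 y z → R1 x z := by
  intro x y z hxy hyz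
  have := h (fun _ w => R1 x w) x
  simp [MForm.toB, pM, BSat] at this
  exact this y hxy z hyz

lemma valid_mck (h : BValid ![R1, R2] (MForm.toB 0 McKM)) :
    ∀ (V : W → Prop) (x : W),
      (∀ y, R1 x y → ∃ z, R1 y z ∧ V z) → ∃ y, R1 x y ∧ ∀ z, R1 y z → V z := by
  intro V x hx
  have := h (fun _ => V) x
  simp [McKM, MForm.dia, MForm.neg, MForm.toB, pM, BSat] at this
  exact this hx

end Semantics

/-- on any frame validating S4.1 ∗ S4, the formula
◇₁□₂(◇₁p → □₁p) is valid iff every x has an R₁-successor y all of whose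
R₂-successors z satisfy R₁(z) = {z}. -/
theorem MKB_frame_correspondence :
    ∀ (W : Type) (R1 R2 : W → W → Prop), Nonempty W →
      (∀ A ∈ FusionL, BValid ![R1, R2] A) →
      (BValid ![R1, R2] MKB ↔
        ∀ x : W, ∃ y : W, R1 x y ∧ ∀ z : W, R2 y z → {t | R1 z t} = {z}) := by
  intro W R1 R2 _ hF
  -- the needed fusion theorems
  have mem1 : MForm.toB 0 ((MForm.box pM).imp pM) ∈ FusionL :=
    BProv.axm (Or.inl ⟨_, MProv.axm (Or.inl (by simp [S4Ax])), rfl⟩)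
  have mem2 : MForm.toB 0 ((MForm.box pM).imp (MForm.box (MForm.box pM))) ∈ FusionL :=
    BProv.axm (Or.inl ⟨_, MProv.axm (Or.inl (by simp [S4Ax])), rfl⟩)
  have mem3 : MForm.toB 0 McKM ∈ FusionL :=
    BProv.axm (Or.inl ⟨_, MProv.axm (Or.inr rfl), rfl⟩)
  have hrefl : ∀ x, R1 x x := valid_T1 R1 R2 (hF _ mem1)
  have htrans : ∀ {x y z}, R1 x y → R1 y z → R1 x z := valid_4 R1 R2 (hF _ mem2)
  have hmck := valid_mck R1 R2 (hF _ mem3)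
  have hfin : ∀ x : W, ∃ y, R1 x y ∧ ∀ z, R1 y z → z = y :=
    mckinsey_final R1 hrefl (fun h h' => htrans h h') hmck
  constructor
  · intro hv x
    have := (BSat_MKB R1 R2 (fun _ w => ∀ t, R1 w t → t = w) x).mp (hv _ x)
    obtain ⟨y, hxy, hy⟩ := this
    refine ⟨y, hxy, fun z hz => ?_⟩
    obtain ⟨u, hu, hufin⟩ := hfin z
    have hzfin : ∀ t, R1 z t → ∀ s, R1 t s → s = t :=
      hy z hz ⟨u, hu, fun s hs => hufin s hs⟩
    have hz' : ∀ s, R1 z s → s = z := hzfin z (hrefl z)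
    ext t
    simp only [Set.mem_setOf_eq, Set.mem_singleton_iff]
    exact ⟨fun h => hz' t h, fun h => h ▸ hrefl z⟩
  · intro h V x
    refine (BSat_MKB R1 R2 V x).mpr ?_
    obtain ⟨y, hxy, hy⟩ := h x
    refine ⟨y, hxy, fun z hz hex t ht => ?_⟩
    obtain ⟨s, hs, hVs⟩ := hex
    have hsz : s = z := by
      have := hy z hz
      have : s ∈ ({z} : Set W) := this ▸ hs
      simpa using this
    have htz : t = z := by
      have := hy z hz
      have : t ∈ ({z} : Set W) := this ▸ ht
      simpa using this
    rw [htz, ← hsz]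
    exact hVs
end

section
/- The formula ◇₁□₂(◇₁p → □₁p) does not belong to the fusion S4.1 ∗ S4; in particular, there exists a Kripke 2-frame validating S4.1 ∗ S4 in which ◇₁□₂(◇₁p → □₁p) fails. -/
/- ============== Auxiliary lemmas for STATEMENT 9 ============== -/

section Aux9

lemma MKSat_subst {W : Type} (R : W → W → Prop) (V : ℕ → W → Prop) (σ : ℕ → MForm)
    (A : MForm) : ∀ x, MKSat R V x (A.subst σ) ↔
      MKSat R (fun n y => MKSat R V y (σ n)) x A := by
  induction A with
  | var n => intro x; rfl
  | bot => intro x; rfl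
  | imp A B ih1 ih2 => intro x; simp only [MForm.subst, MKSat, ih1, ih2]
  | box A ih => intro x; simp only [MForm.subst, MKSat, ih]

lemma msound {W : Type} (R : W → W → Prop) {Ax : Set MForm} {A : MForm}
    (h : MProv Ax A) (hAx : ∀ B ∈ Ax, MKValid R B) : MKValid R A := by
  induction h with
  | axm hA => exact hAx _ hA
  | pl1 => exact fun V x a _ => a
  | pl2 => exact fun V x h1 h2 h3 => h1 h3 (h2 h3)
  | pl3 => exact fun V x h => Classical.byContradiction h
  | kax => exact fun V x h1 h2 y hy => h1 y hy (h2 y hy)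
  | mp _ _ ih1 ih2 => exact fun V x => ih1 V x (ih2 V x)
  | nec _ ih => exact fun V x y _ => ih V y
  | subst σ _ ih => intro V x; rw [MKSat_subst]; exact ih _ x

lemma BSat_subst {W : Type} (R : Fin 2 → W → W → Prop) (V : ℕ → W → Prop)
    (σ : ℕ → BForm) (A : BForm) : ∀ x, BSat R V x (A.subst σ) ↔
      BSat R (fun n y => BSat R V y (σ n)) x A := by
  induction A with
  | var n => intro x; rfl
  | bot => intro x; rfl
  | imp A B ih1 ih2 => intro x; simp only [BForm.subst, BSat, ih1, ih2]
  | box i A ih => intro x; simp only [BForm.subst, BSat, ih]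

lemma bsound {W : Type} (R : Fin 2 → W → W → Prop) {Ax : Set BForm} {A : BForm}
    (h : BProv Ax A) (hAx : ∀ B ∈ Ax, BValid R B) : BValid R A := by
  induction h with
  | axm hA => exact hAx _ hA
  | pl1 => exact fun V x a _ => a
  | pl2 => exact fun V x h1 h2 h3 => h1 h3 (h2 h3)
  | pl3 => exact fun V x h => Classical.byContradiction h
  | kax i => exact fun V x h1 h2 y hy => h1 y hy (h2 y hy)
  | mp _ _ ih1 ih2 => exact fun V x => ih1 V x (ih2 V x)
  | nec i _ ih => exact fun V x y _ => ih V y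
  | subst σ _ ih => intro V x; rw [BSat_subst]; exact ih _ x

lemma toB_sat {W : Type} (R : Fin 2 → W → W → Prop) (V : ℕ → W → Prop) (i : Fin 2)
    (A : MForm) : ∀ x, BSat R V x (A.toB i) ↔ MKSat (R i) V x A := by
  induction A with
  | var n => intro x; rfl
  | bot => intro x; rfl
  | imp A B ih1 ih2 => intro x; simp only [MForm.toB, BSat, MKSat, ih1, ih2]
  | box A ih => intro x; simp only [MForm.toB, BSat, MKSat, ih]

lemma mck_valid {W : Type} (R : W → W → Prop)
    (hfin : ∀ x : W, ∃ f, R x f ∧ ∀ z, R f z → z = f) : MKValid R McKM := by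
  intro V x h hcon
  obtain ⟨f, hxf, hf⟩ := hfin x
  refine h f hxf ?_
  intro z hz hzp
  refine hcon f hxf ?_
  intro z' hz'
  rw [hf z' hz']
  rw [hf z hz] at hzp
  exact hzp

lemma s4_valid {W : Type} (R : W → W → Prop) (hrefl : ∀ x, R x x)
    (htrans : ∀ {x y z}, R x y → R y z → R x z) :
    ∀ B ∈ S4Ax, MKValid R B := by
  rintro B (rfl | rfl)
  · exact fun V x h => h x (hrefl x)
  · exact fun V x h y hy z hz => h z (htrans hy hz)

/-- The first relation of the counterframe on `Fin 4`:
`0` and the leaves `2,3` are final, `1` sees the leaves. -/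
def Rcf1 : Fin 4 → Fin 4 → Prop := fun a b => a = b ∨ (a = 1 ∧ (b = 2 ∨ b = 3))

/-- The second relation of the counterframe: reflexive plus `0 → 1`. -/
def Rcf2 : Fin 4 → Fin 4 → Prop := fun a b => a = b ∨ (a = 0 ∧ b = 1)

instance : ∀ a b, Decidable (Rcf1 a b) := fun a b => by unfold Rcf1; infer_instance
instance : ∀ a b, Decidable (Rcf2 a b) := fun a b => by unfold Rcf2; infer_instance

lemma Rcf1_trans : ∀ x y z : Fin 4, Rcf1 x y → Rcf1 y z → Rcf1 x z := by decide
lemma Rcf2_trans : ∀ x y z : Fin 4, Rcf2 x y → Rcf2 y z → Rcf2 x z := by decide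
lemma Rcf1_from0 : ∀ y : Fin 4, Rcf1 0 y → y = 0 := by decide

lemma cf_fusion_valid : ∀ A ∈ FusionAx, BValid ![Rcf1, Rcf2] A := by
  rintro A (⟨B, hB, rfl⟩ | ⟨B, hB, rfl⟩)
  · intro V x
    rw [toB_sat]
    have h0 : (![Rcf1, Rcf2] : Fin 2 → Fin 4 → Fin 4 → Prop) 0 = Rcf1 := rfl
    rw [h0]
    refine msound Rcf1 hB ?_ V x
    rintro C (hC | rfl)
    · exact s4_valid Rcf1 (by decide) (fun {x y z} => Rcf1_trans x y z) C hC
    · exact mck_valid Rcf1 (by decide)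
  · intro V x
    rw [toB_sat]
    have h1 : (![Rcf1, Rcf2] : Fin 2 → Fin 4 → Fin 4 → Prop) 1 = Rcf2 := rfl
    rw [h1]
    refine msound Rcf2 hB ?_ V x
    exact s4_valid Rcf2 (by decide) (fun {x y z} => Rcf2_trans x y z)

lemma cf_refutes : ¬ BValid ![Rcf1, Rcf2] MKB := by
  intro h
  have hx := h (fun n w => w = 2) 0
  -- MKB = ◇₁ □₂ (◇₁ p → □₁ p)
  refine hx ?_
  intro y hy hbox
  have hy0 : y = 0 := Rcf1_from0 y hy
  subst hy0
  have h1 : (![Rcf1, Rcf2] : Fin 2 → Fin 4 → Fin 4 → Prop) 1 = Rcf2 := rfl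
  have hz := hbox 1 (by show Rcf2 0 1; exact Or.inr ⟨rfl, rfl⟩)
  -- at 1 : ◇₁ p holds but □₁ p fails
  have hdia : BSat ![Rcf1, Rcf2] (fun n w => w = 2) 1 (BForm.dia 0 pB) := by
    intro hall
    exact hall 2 (Or.inr ⟨rfl, Or.inl rfl⟩) rfl
  have hboxp := hz hdia 3 (Or.inr ⟨rfl, Or.inr rfl⟩)
  have h32 : (3 : Fin 4) = 2 := hboxp
  exact absurd h32 (by decide)

end Aux9

/-- ◇₁□₂(◇₁p → □₁p) is not in the fusion S4.1 ∗ S4; in particular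
some Kripke 2-frame validates the fusion but refutes the formula. -/
theorem MKB_not_in_fusion :
    MKB ∉ FusionL ∧
    ∃ (W : Type) (R1 R2 : W → W → Prop), Nonempty W ∧
      (∀ A ∈ FusionL, BValid ![R1, R2] A) ∧ ¬ BValid ![R1, R2] MKB := by
  have hval : ∀ A ∈ FusionL, BValid ![Rcf1, Rcf2] A := fun A hA =>
    bsound _ hA cf_fusion_valid
  refine ⟨fun hMKB => cf_refutes (hval _ hMKB), Fin 4, Rcf1, Rcf2, ⟨0⟩, hval, cf_refutes⟩
end

section
/- The family B = {U_k(α) : α ∈ W_ω, k > 0} has the property that any two of its members are either disjoint or comparable by inclusion (for α, β ∈ W_ω and 0 < k ≤ m, either U_k(α) ∩ U_m(β) = ∅ or one of U_k(α), U_m(β) contains the other); consequently B is closed under nonempty pairwise intersections and forms a base for a topology on W_ω. -/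
/- ============== Auxiliary lemmas ============== -/

lemma takeSeq_take {γ : Type} (s : ℕ → Option γ) {k m : ℕ} (h : k ≤ m) :
    (takeSeq s m).take k = takeSeq s k := by
  apply List.ext_getElem
  · simp [takeSeq, h]
  · intro i h1 h2
    simp [takeSeq, List.getElem_take]

lemma fF_prefix {γ : Type} {l1 l2 : List (Option γ)} (h : l1 <+: l2) :
    fF l1 <+: fF l2 := by
  obtain ⟨t, rfl⟩ := h
  exact ⟨fF t, by simp [fF]⟩

lemma takeSeq_prefix {γ : Type} (s : ℕ → Option γ) {k m : ℕ} (h : k ≤ m) :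
    takeSeq s k <+: takeSeq s m := by
  rw [← takeSeq_take s h]; exact List.take_prefix _ _

lemma fF_takeSeq_stable {γ : Type} {s : ℕ → Option γ} {N : ℕ}
    (hN : ∀ j, N ≤ j → s j = none) :
    ∀ k, N ≤ k → fF (takeSeq s k) = fF (takeSeq s N) := by
  intro k hk
  induction k, hk using Nat.le_induction with
  | base => rfl
  | succ n hn ih =>
    have : takeSeq s (n + 1) = (takeSeq s n).concat (s n) := by
      simp only [takeSeq, List.ofFn_succ']
      rfl
    rw [this, List.concat_eq_append, fF, List.filterMap_append, hN n hn]
    simpa [fF] using ih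

lemma exists_bound (β : Wom) : ∃ N, ∀ j, N ≤ j → β.1 j = none := by
  obtain ⟨M, hM⟩ := β.2.bddAbove
  refine ⟨M + 1, fun j hj => ?_⟩
  by_contra h
  exact absurd (hM h) (by omega)

lemma stN_spec (β : Wom) : ∀ j, stN β.1 ≤ j → β.1 j = none := by
  have hne : {N | ∀ k, N ≤ k → β.1 k = none}.Nonempty := exists_bound β
  exact Nat.sInf_mem hne

lemma prefix_squash (β : Wom) (k : ℕ) : fF (takeSeq β.1 k) <+: squash β.1 := by
  rcases le_total k (stN β.1) with h | h
  · exact fF_prefix (takeSeq_prefix _ h)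
  · rw [squash, fF_takeSeq_stable (stN_spec β) k h]

lemma mem_Uset_self (β : Wom) (k : ℕ) : β ∈ Uset β k :=
  ⟨rfl, prefix_squash β k⟩

lemma Uset_subset {α β γ : Wom} {k m : ℕ} (hkm : k ≤ m)
    (hγα : γ ∈ Uset α k) (hγβ : γ ∈ Uset β m) :
    Uset β m ⊆ Uset α k := by
  obtain ⟨hγα1, hγα2⟩ := hγα
  obtain ⟨hγβ1, hγβ2⟩ := hγβ
  -- takeSeq α k = takeSeq β k
  have hαβ : takeSeq α.1 k = takeSeq β.1 k := by
    rw [← hγα1, ← takeSeq_take γ.1 hkm, hγβ1, takeSeq_take β.1 hkm]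
  intro δ ⟨hδ1, hδ2⟩
  constructor
  · rw [← takeSeq_take δ.1 hkm, hδ1, takeSeq_take β.1 hkm, hαβ]
  · rw [hαβ]
    exact (fF_prefix (takeSeq_prefix β.1 hkm)).trans hδ2

/-- any two sets U_k(α), U_m(β) (0 < k ≤ m) are disjoint or
comparable by inclusion; consequently {U_k(α) : k > 0} is a base for the
topology T_ω it generates. -/
theorem Uset_base :
    (∀ (α β : Wom) (k m : ℕ), 0 < k → k ≤ m →
      Uset α k ∩ Uset β m = ∅ ∨ Uset α k ⊆ Uset β m ∨ Uset β m ⊆ Uset α k) ∧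
    TopologicalSpace.IsTopologicalBasis (t := Tom)
      {S | ∃ (α : Wom) (k : ℕ), 0 < k ∧ S = Uset α k} := by
  constructor
  · intro α β k m _ hkm
    rcases Set.eq_empty_or_nonempty (Uset α k ∩ Uset β m) with h | ⟨γ, hγα, hγβ⟩
    · exact Or.inl h
    · exact Or.inr (Or.inr (Uset_subset hkm hγα hγβ))
  · refine @TopologicalSpace.IsTopologicalBasis.mk Wom Tom _ ?_ ?_ ?_
    · rintro t₁ ⟨α, k, hk, rfl⟩ t₂ ⟨β, m, hm, rfl⟩ x ⟨hx1, hx2⟩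
      rcases le_total k m with h | h
      · exact ⟨Uset β m, ⟨β, m, hm, rfl⟩, hx2,
          Set.subset_inter (Uset_subset h hx1 hx2) subset_rfl⟩
      · exact ⟨Uset α k, ⟨α, k, hk, rfl⟩, hx1,
          Set.subset_inter subset_rfl (Uset_subset h hx2 hx1)⟩
    · ext β
      simp only [Set.mem_sUnion, Set.mem_univ, iff_true]
      exact ⟨Uset β 1, ⟨β, 1, one_pos, rfl⟩, mem_Uset_self β 1⟩
    · rfl
end

section
/- The topological space 𝔛 = (W_ω × ℕ, T), where T is the topology generated by the base consisting of the sets U′_k(α,0) = (U_k(α) × {0}) ∪ (U_k(α) × {n ∈ ℕ : n ≥ k}) and U′_k(α,n) = {⟨α,n⟩} for n ≥ 1, is weakly scattered; consequently 𝔛 validates the McKinsey axiom □◇p → ◇□p under the topological semantics. -/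

lemma isolated_of_pos (α : Wom) (n : ℕ) (hn : n ≠ 0) :
    TX.IsOpen ({(α, n)} : Set (Wom × ℕ)) := by
  apply TopologicalSpace.GenerateOpen.basic
  exact ⟨α, 1, n, by simp [U'set, hn]⟩

lemma tail_mem {U : Set (Wom × ℕ)} (h : TX.IsOpen U) :
    ∀ x ∈ U, x.2 = 0 → ∃ k, ∀ m, k ≤ m → 1 ≤ m → (x.1, m) ∈ U := by
  induction h with
  | basic S hS =>
      obtain ⟨α, k, n, rfl⟩ := hS
      intro x hx hx0
      by_cases hn : n = 0
      · subst hn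
        simp only [U'set, if_pos rfl] at hx ⊢
        have hx1 : x.1 ∈ Uset α k := by
          rcases hx with h | h
          · exact h.1
          · exact h.1
        exact ⟨k, fun m hm _ => Or.inr ⟨hx1, hm⟩⟩
      · simp only [U'set, if_neg hn, Set.mem_singleton_iff] at hx
        subst hx
        simp at hx0
        exact absurd hx0 hn
  | univ => intro x hx hx0; exact ⟨0, fun m _ _ => trivial⟩
  | inter S T hS hT ihS ihT =>
      intro x hx hx0
      obtain ⟨k1, h1⟩ := ihS x hx.1 hx0
      obtain ⟨k2, h2⟩ := ihT x hx.2 hx0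
      exact ⟨max k1 k2, fun m hm hm1 => ⟨h1 m (le_trans (le_max_left _ _) hm) hm1,
        h2 m (le_trans (le_max_right _ _) hm) hm1⟩⟩
  | sUnion 𝒮 hS ih =>
      intro x hx hx0
      obtain ⟨S, hSmem, hxS⟩ := hx
      obtain ⟨k, hk⟩ := ih S hSmem x hxS hx0
      exact ⟨k, fun m hm hm1 => ⟨S, hSmem, hk m hm hm1⟩⟩

lemma X_is_ws : WeaklyScattered TX := by
  rintro U hU ⟨x, hx⟩
  by_cases h0 : x.2 = 0
  · obtain ⟨k, hk⟩ := tail_mem hU x hx h0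
    refine ⟨(x.1, max k 1), hk _ (le_max_left _ _) (le_max_right _ _), ?_⟩
    exact isolated_of_pos _ _ (by omega : max k 1 ≠ 0)
  · refine ⟨x, hx, ?_⟩
    simpa using isolated_of_pos x.1 x.2 h0

lemma mckinsey_of_ws {X : Type} (t : TopologicalSpace X) (h : WeaklyScattered t) :
    MTValid t McKM := by
  intro V x
  simp only [McKM, MForm.dia, MForm.neg, pM, MTSat]
  intro H1 H2
  obtain ⟨U, hUopen, hxU, hU⟩ := H1
  obtain ⟨V', hVopen, hxV, hV⟩ := H2
  obtain ⟨y, hyW, hyIso⟩ := h (U ∩ V') (t.isOpen_inter _ _ hUopen hVopen) ⟨x, hxU, hxV⟩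
  have hdia := hU y hyW.1
  have hp : MTSat t V y (MForm.var 0) := by
    by_contra hnp
    exact hdia ⟨{y}, hyIso, rfl, fun z hz => by
      rw [Set.mem_singleton_iff] at hz; subst hz; exact hnp⟩
  exact hV y hyW.2 ⟨{y}, hyIso, rfl, fun z hz => by
    rw [Set.mem_singleton_iff] at hz; subst hz; exact hp⟩

/-- the space 𝔛 = (W_ω × ℕ, T) is weakly scattered and hence
validates the McKinsey axiom □◇p → ◇□p. -/
theorem X_weaklyScattered_and_McKinsey :
    WeaklyScattered TX ∧ MTValid TX McKM := by
  exact ⟨X_is_ws, mckinsey_of_ws TX X_is_ws⟩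
end

section
/- The map g : W_ω × W_ω → T_{2,2}, defined by interleaving — for α = x₁x₂… and β = y₁y₂… in W_ω, g(α,β) is the finite word over {a₁,a₂,b₁,b₂} obtained from the infinite sequence a_{x₁} b_{y₁} a_{x₂} b_{y₂} … (with the convention a₀ = b₀ = 0) by deleting all occurrences of 0 — is a p-morphism (surjective, open and continuous in each of the two topologies) from the bitopological product 𝒴 × 𝒴 onto Top₂(𝕋_{2,2}): g is surjective, g is open and continuous as a map from the horizontal topology of 𝒴 × 𝒴 to the Alexandrov topology T_{R₁}, and open and continuous as a map from the vertical topology of 𝒴 × 𝒴 to the Alexandrov topology T_{R₂}. -/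
/-!
If `α` and `β` vanish from position `n` on and `α'` agrees with `α` below `n`, then `g(α', β)` is
`g(α, β)` followed by the a-letters of the tail of `α'` after `n`, since the interleaving of that
tail with the zero sequence contributes a-letters only. The basic neighbourhoods `U_n(α)` are
exactly the sets of paths agreeing with `α` below `n`. Hence moving inside a small horizontal
neighbourhood only appends a-letters (continuity for `R₁`), and choosing the tail appends any
prescribed a-word inside any neighbourhood (openness); the vertical case is symmetric with
b-letters. Starting from `g(0, 0) = []`, appending one letter at a time gives surjectivity.
Since the horizontal and vertical topologies are products with a discrete factor, everything
reduces to one section of `g` at a time.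
-/

open Filter Topology TopologicalSpace

section Alexandrov

variable {W : Type} {R : W → W → Prop}

theorem nhds_alexandrov (hrefl : ∀ w, R w w) (htrans : ∀ {u v w}, R u v → R v w → R u w)
    (w : W) : @nhds W (alexandrov R) w = 𝓟 {t | R w t} := by
  rw [alexandrov, nhds_generateFrom]
  refine le_antisymm (iInf₂_le _ ⟨hrefl w, w, rfl⟩) (le_iInf₂ ?_)
  rintro _ ⟨hw, x, rfl⟩
  exact principal_mono.2 fun t hwt => htrans hw hwt

variable {X : Type} [TopologicalSpace X] {f : X → W}

theorem continuous_alexandrov_iff (hrefl : ∀ w, R w w)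
    (htrans : ∀ {u v w}, R u v → R v w → R u w) :
    Continuous[_, alexandrov R] f ↔ ∀ x, ∀ᶠ y in 𝓝 x, R (f x) (f y) := by
  simp only [continuous_iff_continuousAt, ContinuousAt, nhds_alexandrov hrefl htrans,
    tendsto_principal, Set.mem_ofPred_eq]

theorem isOpenMap_alexandrov_iff (hrefl : ∀ w, R w w)
    (htrans : ∀ {u v w}, R u v → R v w → R u w) :
    @IsOpenMap X W _ (alexandrov R) f ↔ ∀ x, ∀ U ∈ 𝓝 x, ∀ w, R (f x) w → w ∈ f '' U := by
  simp only [isOpenMap_iff_nhds_le, nhds_alexandrov hrefl htrans, le_map_iff, mem_principal]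
  rfl

end Alexandrov

section Bitopology

variable {X Y : Type} (t : TopologicalSpace X)

theorem horiz_eq_prod : horiz t = @instTopologicalSpaceProd X Y t ⊥ := by
  let _ : TopologicalSpace Y := ⊥
  have : DiscreteTopology Y := ⟨rfl⟩
  rw [(isTopologicalBasis_opens.prod (isTopologicalBasis_singletons Y)).eq_generateFrom, horiz]
  congr 1
  ext S
  constructor
  · rintro ⟨U, y, hU, rfl⟩
    exact ⟨U, hU, {y}, ⟨y, rfl⟩, rfl⟩
  · rintro ⟨U, hU, _, ⟨y, rfl⟩, rfl⟩
    exact ⟨U, y, hU, rfl⟩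

theorem vert_eq_prod : vert t = @instTopologicalSpaceProd Y X ⊥ t := by
  let _ : TopologicalSpace Y := ⊥
  have : DiscreteTopology Y := ⟨rfl⟩
  rw [((isTopologicalBasis_singletons Y).prod isTopologicalBasis_opens).eq_generateFrom, vert]
  congr 1
  ext S
  constructor
  · rintro ⟨x, U, hU, rfl⟩
    exact ⟨{x}, ⟨x, rfl⟩, U, hU, rfl⟩
  · rintro ⟨_, ⟨x, rfl⟩, U, hU, rfl⟩
    exact ⟨x, U, hU, rfl⟩

variable {Z : Type} (s : TopologicalSpace Z) {f : X × Y → Z} {g : Y × X → Z}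

theorem continuous_horiz_iff : Continuous[horiz t, s] f ↔ ∀ y, Continuous[t, s] (f ⟨·, y⟩) := by
  let _ : TopologicalSpace Y := ⊥
  have : DiscreteTopology Y := ⟨rfl⟩
  rw [horiz_eq_prod]
  exact continuous_prod_of_discrete_right

theorem isOpenMap_horiz_iff :
    @IsOpenMap _ _ (horiz t) s f ↔ ∀ y, @IsOpenMap _ _ t s (f ⟨·, y⟩) := by
  let _ : TopologicalSpace Y := ⊥
  have : DiscreteTopology Y := ⟨rfl⟩
  rw [horiz_eq_prod]
  exact isOpenMap_prod_of_discrete_right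

theorem continuous_vert_iff : Continuous[vert t, s] g ↔ ∀ y, Continuous[t, s] (g ⟨y, ·⟩) := by
  let _ : TopologicalSpace Y := ⊥
  have : DiscreteTopology Y := ⟨rfl⟩
  rw [vert_eq_prod]
  exact continuous_prod_of_discrete_left

theorem isOpenMap_vert_iff :
    @IsOpenMap _ _ (vert t) s g ↔ ∀ y, @IsOpenMap _ _ t s (g ⟨y, ·⟩) := by
  let _ : TopologicalSpace Y := ⊥
  have : DiscreteTopology Y := ⟨rfl⟩
  rw [vert_eq_prod]
  exact isOpenMap_prod_of_discrete_left

end Bitopology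

section Squash

variable {γ : Type} {s t : ℕ → Option γ}

theorem takeSeq_eq_takeSeq_iff {n : ℕ} : takeSeq s n = takeSeq t n ↔ ∀ i < n, s i = t i := by
  simp [takeSeq, List.ofFn_inj, funext_iff, Fin.forall_iff]

theorem takeSeq_add (m n : ℕ) :
    takeSeq s (m + n) = takeSeq s m ++ takeSeq (fun k => s (m + k)) n := by
  simp [takeSeq, List.ofFn_add]

theorem takeSeq_succ (n : ℕ) : takeSeq s (n + 1) = takeSeq s n ++ [s n] := by
  rw [takeSeq_add]
  simp [takeSeq]

theorem fF_append (l l' : List (Option γ)) : fF (l ++ l') = fF l ++ fF l' :=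
  List.filterMap_append

theorem fF_singleton (x : Option γ) : fF [x] = x.toList := by
  cases x <;> rfl

theorem fF_takeSeq_of_forall_eq_none (h : ∀ k, s k = none) (n : ℕ) : fF (takeSeq s n) = [] := by
  simp [fF, takeSeq, h]

theorem finite_ne_none_iff : {k | s k ≠ none}.Finite ↔ ∀ᶠ k in atTop, s k = none := by
  rw [← Nat.cofinite_eq_atTop, eventually_cofinite]

theorem squash_eq_fF_takeSeq {m : ℕ} (h : ∀ k, m ≤ k → s k = none) :
    squash s = fF (takeSeq s m) := by
  have hst : ∀ k, stN s ≤ k → s k = none :=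
    Nat.sInf_mem (s := {N | ∀ k, N ≤ k → s k = none}) ⟨m, h⟩
  have hle : stN s ≤ m := Nat.sInf_le h
  rw [squash, ← Nat.add_sub_cancel' hle, takeSeq_add, fF_append,
    fF_takeSeq_of_forall_eq_none (s := fun k => s (stN s + k)) (fun k => hst _ (by omega)),
    List.append_nil]

theorem squash_eq_append (h : ∀ᶠ k in atTop, s k = none) (n : ℕ) :
    squash s = fF (takeSeq s n) ++ squash (fun k => s (n + k)) := by
  obtain ⟨m, hm⟩ := eventually_atTop.1 h
  rw [squash_eq_fF_takeSeq (m := n + m) (fun k hk => hm k (by omega)), takeSeq_add, fF_append,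
    squash_eq_fF_takeSeq (m := m) (fun k hk => hm _ (by omega))]

theorem squash_none : squash (fun _ => (none : Option γ)) = [] := by
  rw [squash_eq_fF_takeSeq (m := 0) (fun _ _ => rfl)]
  rfl

theorem squash_getElem? (e : List γ) : squash (fun k => e[k]?) = e := by
  rw [squash_eq_fF_takeSeq (m := e.length) (fun k hk => List.getElem?_eq_none hk)]
  have : takeSeq (fun k => e[k]?) e.length = e.map some := by
    simp [takeSeq]
  simp [this, fF, List.filterMap_map]

end Squash

theorem shiftSeq_none (n : ℕ) : shiftSeq (fun _ => none) n = fun _ => none := rfl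

theorem shiftSeq_eventually_eq_none {s : Seq3} (hs : ∀ᶠ k in atTop, s k = none) (n : ℕ) :
    ∀ᶠ k in atTop, shiftSeq s n k = none := by
  obtain ⟨m, hm⟩ := eventually_atTop.1 hs
  filter_upwards [eventually_ge_atTop m] with k hk
  exact hm _ (by omega)

section Interleave

variable {α β α' β' γ : Seq3}

theorem interleave_two_mul_add (α β : Seq3) (n : ℕ) :
    (fun k => interleave α β (2 * n + k)) = interleave (shiftSeq α n) (shiftSeq β n) := by
  funext k
  simp [interleave, shiftSeq, Nat.mul_add_div]

theorem interleave_none : interleave (fun _ => none) (fun _ => none) = fun _ => none := by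
  funext k
  simp [interleave]

theorem gmap_none : gmap (fun _ => none) (fun _ => none) = [] := by
  rw [gmap, interleave_none, squash_none]

theorem interleave_eventually_eq_none (hα : ∀ᶠ k in atTop, α k = none)
    (hβ : ∀ᶠ k in atTop, β k = none) : ∀ᶠ k in atTop, interleave α β k = none := by
  obtain ⟨n, hn⟩ := eventually_atTop.1 (hα.and hβ)
  filter_upwards [eventually_ge_atTop (2 * n)] with k hk
  have := hn (k / 2) (by omega)
  simp [interleave, this.1, this.2]

theorem takeSeq_interleave_congr {n : ℕ} (hα : ∀ k < n, α' k = α k) (hβ : ∀ k < n, β' k = β k) :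
    takeSeq (interleave α' β') (2 * n) = takeSeq (interleave α β) (2 * n) := by
  refine takeSeq_eq_takeSeq_iff.2 fun k hk => ?_
  simp [interleave, hα (k / 2) (by omega), hβ (k / 2) (by omega)]

theorem gmap_eq_append (hα : ∀ᶠ k in atTop, α k = none) (hβ : ∀ᶠ k in atTop, β k = none)
    (n : ℕ) :
    gmap α β = fF (takeSeq (interleave α β) (2 * n)) ++ gmap (shiftSeq α n) (shiftSeq β n) := by
  rw [gmap, squash_eq_append (interleave_eventually_eq_none hα hβ) (2 * n),
    interleave_two_mul_add, gmap]

theorem gmap_eq_gmap_append {n : ℕ} (hα : ∀ k, n ≤ k → α k = none)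
    (hβ : ∀ k, n ≤ k → β k = none) (hα' : ∀ᶠ k in atTop, α' k = none)
    (hβ' : ∀ᶠ k in atTop, β' k = none) (hαα' : ∀ k < n, α' k = α k)
    (hββ' : ∀ k < n, β' k = β k) :
    gmap α' β' = gmap α β ++ gmap (shiftSeq α' n) (shiftSeq β' n) := by
  have hα_shift : shiftSeq α n = fun _ => none := funext fun k => hα _ (by omega)
  have hβ_shift : shiftSeq β n = fun _ => none := funext fun k => hβ _ (by omega)
  rw [gmap_eq_append hα' hβ' n, takeSeq_interleave_congr hαα' hββ',
    gmap_eq_append (eventually_atTop.2 ⟨n, hα⟩) (eventually_atTop.2 ⟨n, hβ⟩) n,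
    hα_shift, hβ_shift, gmap_none, List.append_nil]

theorem fF_takeSeq_interleave_none_right (m : ℕ) :
    fF (takeSeq (interleave γ fun _ => none) (2 * m)) = (fF (takeSeq γ m)).map (Prod.mk false) := by
  induction m with
  | zero => rfl
  | succ m ih =>
    rw [show 2 * (m + 1) = 2 * m + 1 + 1 by ring, takeSeq_succ, takeSeq_succ, takeSeq_succ]
    have h2m : interleave γ (fun _ => none) (2 * m) = (γ m).map (Prod.mk false) := by
      simp [interleave]
    have h2m1 : interleave γ (fun _ => none) (2 * m + 1) = none := by simp [interleave]
    rw [fF_append, fF_append, ih, h2m, h2m1, fF_singleton, fF_singleton, fF_append, fF_singleton]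
    cases γ m <;> simp

theorem fF_takeSeq_interleave_none_left (m : ℕ) :
    fF (takeSeq (interleave (fun _ => none) γ) (2 * m)) =
      (fF (takeSeq γ m)).map (Prod.mk true) := by
  induction m with
  | zero => rfl
  | succ m ih =>
    rw [show 2 * (m + 1) = 2 * m + 1 + 1 by ring, takeSeq_succ, takeSeq_succ, takeSeq_succ]
    have h2m : interleave (fun _ => none) γ (2 * m) = none := by simp [interleave]
    have h2m1 : interleave (fun _ => none) γ (2 * m + 1) = (γ m).map (Prod.mk true) := by
      simp [interleave, Nat.mul_add_div]
    rw [fF_append, fF_append, ih, h2m, h2m1, fF_singleton, fF_singleton, fF_append, fF_singleton]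
    cases γ m <;> simp

theorem gmap_none_right (hγ : ∀ᶠ k in atTop, γ k = none) :
    gmap γ (fun _ => none) = (squash γ).map (Prod.mk false) := by
  obtain ⟨m, hm⟩ := eventually_atTop.1 hγ
  have hγ_shift : shiftSeq γ m = fun _ => none := funext fun k => hm _ (by omega)
  rw [gmap_eq_append hγ (.of_forall fun _ => rfl) m, hγ_shift, shiftSeq_none, gmap_none,
    List.append_nil, fF_takeSeq_interleave_none_right, squash_eq_fF_takeSeq hm]

theorem gmap_none_left (hγ : ∀ᶠ k in atTop, γ k = none) :
    gmap (fun _ => none) γ = (squash γ).map (Prod.mk true) := by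
  obtain ⟨m, hm⟩ := eventually_atTop.1 hγ
  have hγ_shift : shiftSeq γ m = fun _ => none := funext fun k => hm _ (by omega)
  rw [gmap_eq_append (.of_forall fun _ => rfl) hγ m, shiftSeq_none, hγ_shift, gmap_none,
    List.append_nil, fF_takeSeq_interleave_none_left, squash_eq_fF_takeSeq hm]

end Interleave

namespace Wom

theorem eventually_eq_none (α : Wom) : ∀ᶠ k in atTop, α.1 k = none :=
  finite_ne_none_iff.1 α.2

theorem mem_Uset_iff {α β : Wom} {k : ℕ} : β ∈ Uset α k ↔ ∀ i < k, β.1 i = α.1 i := by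
  refine ⟨fun h => takeSeq_eq_takeSeq_iff.1 h.1, fun h => ⟨takeSeq_eq_takeSeq_iff.2 h, ?_⟩⟩
  rw [← takeSeq_eq_takeSeq_iff.2 h, squash_eq_append β.eventually_eq_none k]
  exact List.prefix_append _ _

theorem Uset_antitone (α : Wom) : Antitone (Uset α) := fun _ _ hkl _ hβ =>
  mem_Uset_iff.2 fun i hi => mem_Uset_iff.1 hβ i (by omega)

theorem Uset_zero (α : Wom) : Uset α 0 = Set.univ :=
  Set.eq_univ_of_forall fun _ => mem_Uset_iff.2 fun _ h => absurd h (Nat.not_lt_zero _)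

theorem Uset_subset_of_mem {α β : Wom} {k : ℕ} (h : β ∈ Uset α k) : Uset β k ⊆ Uset α k :=
  fun _ hγ => mem_Uset_iff.2 fun i hi => (mem_Uset_iff.1 hγ i hi).trans (mem_Uset_iff.1 h i hi)

theorem nhds_hasBasis_Uset (α : Wom) : (@nhds Wom Tom α).HasBasis (fun _ => True) (Uset α) := by
  convert hasBasis_iInf_principal (directed_of_isDirected_le fun _ _ h => Uset_antitone α h)
  rw [Tom, nhds_generateFrom]
  refine le_antisymm (le_iInf fun k => ?_) (le_iInf₂ ?_)
  · rcases Nat.eq_zero_or_pos k with rfl | hk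
    · rw [Uset_zero, principal_univ]
      exact le_top
    · exact iInf₂_le _ ⟨mem_Uset_iff.2 fun _ _ => rfl, α, k, hk, rfl⟩
  · rintro _ ⟨hα, β, k, -, rfl⟩
    exact iInf_le_of_le k (principal_mono.2 (Uset_subset_of_mem hα))

end Wom

def prefixAppend (s : Seq3) (n : ℕ) (e : T2W) : Seq3 := fun k => if k < n then s k else e[k - n]?

section PrefixAppend

variable {s : Seq3} {n : ℕ} {e : T2W}

theorem shiftSeq_prefixAppend : shiftSeq (prefixAppend s n e) n = fun k => e[k]? :=
  funext fun k => by simp [prefixAppend, shiftSeq]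

theorem prefixAppend_eventually_eq_none : ∀ᶠ k in atTop, prefixAppend s n e k = none := by
  filter_upwards [eventually_ge_atTop (n + e.length)] with k hk
  simp [prefixAppend, show ¬k < n by omega, show e.length ≤ k - n by omega]

def Wom.prefixAppend (α : Wom) (n : ℕ) (e : T2W) : Wom :=
  ⟨_root_.prefixAppend α.1 n e, finite_ne_none_iff.2 prefixAppend_eventually_eq_none⟩

theorem Wom.prefixAppend_mem_Uset (α : Wom) : α.prefixAppend n e ∈ Uset α n :=
  Wom.mem_Uset_iff.2 fun _ h => if_pos h

end PrefixAppend

def extendsBy (b : Bool) (w w' : T22) : Prop := ∃ e : T2W, w' = w ++ e.map (Prod.mk b)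

theorem extendsBy_refl (b : Bool) (w : T22) : extendsBy b w w := ⟨[], by simp⟩

theorem extendsBy_trans {b : Bool} {u v w : T22} (huv : extendsBy b u v) (hvw : extendsBy b v w) :
    extendsBy b u w := by
  obtain ⟨e, rfl⟩ := huv
  obtain ⟨e', rfl⟩ := hvw
  exact ⟨e ++ e', by simp⟩

theorem extendsBy_eq (b : Bool) :
    (fun w w' : T22 => ∃ c : T22, (∀ l ∈ c, l.1 = b) ∧ w' = w ++ c) = extendsBy b := by
  funext w w'
  refine propext ⟨fun ⟨c, hc, h⟩ => ⟨c.map Prod.snd, ?_⟩, fun ⟨e, h⟩ => ⟨_, by simp, h⟩⟩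
  rw [h, List.map_map]
  congr
  conv_lhs => rw [← List.map_id c]
  exact List.map_congr_left fun l hl => by simp [← hc l hl]

theorem R1T_eq_extendsBy : R1T = extendsBy false := extendsBy_eq false

theorem R2T_eq_extendsBy : R2T = extendsBy true := extendsBy_eq true

section GPair

attribute [local instance] Tom

theorem eventually_gPair_left (p : Wom × Wom) : ∀ᶠ n in atTop, ∀ α ∈ Uset p.1 n,
    gPair (α, p.2) = gPair p ++ (squash (shiftSeq α.1 n)).map (Prod.mk false) := by
  filter_upwards [eventually_forall_ge_atTop.2 p.1.eventually_eq_none,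
    eventually_forall_ge_atTop.2 p.2.eventually_eq_none] with n hα hβ α hαn
  have hβ_shift : shiftSeq p.2.1 n = fun _ => none := funext fun k => hβ _ (by omega)
  rw [gPair, gPair, gmap_eq_gmap_append hα hβ α.eventually_eq_none p.2.eventually_eq_none
    (Wom.mem_Uset_iff.1 hαn) (fun _ _ => rfl), hβ_shift,
    gmap_none_right (shiftSeq_eventually_eq_none α.eventually_eq_none n)]

theorem eventually_gPair_right (p : Wom × Wom) : ∀ᶠ n in atTop, ∀ β ∈ Uset p.2 n,
    gPair (p.1, β) = gPair p ++ (squash (shiftSeq β.1 n)).map (Prod.mk true) := by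
  filter_upwards [eventually_forall_ge_atTop.2 p.1.eventually_eq_none,
    eventually_forall_ge_atTop.2 p.2.eventually_eq_none] with n hα hβ β hβn
  have hα_shift : shiftSeq p.1.1 n = fun _ => none := funext fun k => hα _ (by omega)
  rw [gPair, gPair, gmap_eq_gmap_append hα hβ p.1.eventually_eq_none β.eventually_eq_none
    (fun _ _ => rfl) (Wom.mem_Uset_iff.1 hβn), hα_shift,
    gmap_none_left (shiftSeq_eventually_eq_none β.eventually_eq_none n)]

theorem exists_mem_Uset_gPair_left (p : Wom × Wom) (k : ℕ) (e : T2W) :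
    ∃ α ∈ Uset p.1 k, gPair (α, p.2) = gPair p ++ e.map (Prod.mk false) := by
  obtain ⟨n, hkn, hn⟩ := ((eventually_ge_atTop k).and (eventually_gPair_left p)).exists
  refine ⟨p.1.prefixAppend n e, Wom.Uset_antitone _ hkn p.1.prefixAppend_mem_Uset, ?_⟩
  rw [hn _ p.1.prefixAppend_mem_Uset, Wom.prefixAppend, shiftSeq_prefixAppend, squash_getElem?]

theorem exists_mem_Uset_gPair_right (p : Wom × Wom) (k : ℕ) (e : T2W) :
    ∃ β ∈ Uset p.2 k, gPair (p.1, β) = gPair p ++ e.map (Prod.mk true) := by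
  obtain ⟨n, hkn, hn⟩ := ((eventually_ge_atTop k).and (eventually_gPair_right p)).exists
  refine ⟨p.2.prefixAppend n e, Wom.Uset_antitone _ hkn p.2.prefixAppend_mem_Uset, ?_⟩
  rw [hn _ p.2.prefixAppend_mem_Uset, Wom.prefixAppend, shiftSeq_prefixAppend, squash_getElem?]

theorem continuous_gPair_left (β : Wom) :
    Continuous[Tom, alexandrov (extendsBy false)] fun α => gPair (α, β) := by
  refine (continuous_alexandrov_iff (extendsBy_refl false) extendsBy_trans).2 fun α => ?_
  obtain ⟨n, hn⟩ := (eventually_gPair_left (α, β)).exists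
  exact (Wom.nhds_hasBasis_Uset α).eventually_iff.2 ⟨n, trivial, fun α' h => ⟨_, hn α' h⟩⟩

theorem continuous_gPair_right (α : Wom) :
    Continuous[Tom, alexandrov (extendsBy true)] fun β => gPair (α, β) := by
  refine (continuous_alexandrov_iff (extendsBy_refl true) extendsBy_trans).2 fun β => ?_
  obtain ⟨n, hn⟩ := (eventually_gPair_right (α, β)).exists
  exact (Wom.nhds_hasBasis_Uset β).eventually_iff.2 ⟨n, trivial, fun β' h => ⟨_, hn β' h⟩⟩

theorem isOpenMap_gPair_left (β : Wom) :
    @IsOpenMap _ _ Tom (alexandrov (extendsBy false)) fun α => gPair (α, β) := by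
  refine (isOpenMap_alexandrov_iff (extendsBy_refl false) extendsBy_trans).2
    fun α U hU w ⟨e, hw⟩ => ?_
  obtain ⟨k, -, hk⟩ := (Wom.nhds_hasBasis_Uset α).mem_iff.1 hU
  obtain ⟨α', hα', hg⟩ := exists_mem_Uset_gPair_left (α, β) k e
  exact ⟨α', hk hα', hg.trans hw.symm⟩

theorem isOpenMap_gPair_right (α : Wom) :
    @IsOpenMap _ _ Tom (alexandrov (extendsBy true)) fun β => gPair (α, β) := by
  refine (isOpenMap_alexandrov_iff (extendsBy_refl true) extendsBy_trans).2
    fun β U hU w ⟨e, hw⟩ => ?_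
  obtain ⟨k, -, hk⟩ := (Wom.nhds_hasBasis_Uset β).mem_iff.1 hU
  obtain ⟨β', hβ', hg⟩ := exists_mem_Uset_gPair_right (α, β) k e
  exact ⟨β', hk hβ', hg.trans hw.symm⟩

end GPair

theorem gPair_surjective : Function.Surjective gPair := by
  intro w
  induction w using List.reverseRecOn with
  | nil => exact ⟨(⟨fun _ => none, by simp⟩, ⟨fun _ => none, by simp⟩), gmap_none⟩
  | append_singleton w l ih =>
    obtain ⟨p, rfl⟩ := ih
    obtain ⟨_ | _, i⟩ := l
    · obtain ⟨α, -, h⟩ := exists_mem_Uset_gPair_left p 0 [i]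
      exact ⟨(α, p.2), h⟩
    · obtain ⟨β, -, h⟩ := exists_mem_Uset_gPair_right p 0 [i]
      exact ⟨(p.1, β), h⟩

/-- the interleaving map g is a p-morphism (surjective, open and
continuous in each topology) from 𝒴 × 𝒴 onto Top₂(𝕋₂,₂). -/
theorem gPair_pmorphism :
    Function.Surjective gPair ∧
    @Continuous _ _ (horiz Tom) (alexandrov R1T) gPair ∧
    @IsOpenMap _ _ (horiz Tom) (alexandrov R1T) gPair ∧
    @Continuous _ _ (vert Tom) (alexandrov R2T) gPair ∧
    @IsOpenMap _ _ (vert Tom) (alexandrov R2T) gPair := by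
  rw [R1T_eq_extendsBy, R2T_eq_extendsBy]
  exact ⟨gPair_surjective,
    (continuous_horiz_iff _ _).2 continuous_gPair_left,
    (isOpenMap_horiz_iff _ _).2 isOpenMap_gPair_left,
    (continuous_vert_iff _ _).2 continuous_gPair_right,
    (isOpenMap_vert_iff _ _).2 isOpenMap_gPair_right⟩
end
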